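/- Let G be a weighted DAG with source s, sink t, and SW(G) the weighted sum over s–t paths. Form G' from G by adding an edge of weight 1 from t to s and a loop of weight 1 at every vertex other than s and t. Then the sum of weights of all cycle covers of G' equals SW(G). -/

import Mathlib

open scoped Classical

/-! ### Arithmetic formulas -/

inductive Formula (K : Type) (ν : Type) where
  | const : K → Formula K ν
  | var : ν → Formula K ν
  | add : Formula K ν → Formula K ν → Formula K ν
  | mul : Formula K ν → Formula K ν → Formula K ν

namespace Formula
variable {K ν : Type}

/-- Number of gates of a formula. -/
def size : Formula K ν → ℕ
  | const _ => 1
  | var _ => 1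
  | add f g => f.size + g.size + 1
  | mul f g => f.size + g.size + 1

/-- Depth of a formula: longest path from an input to the output. -/
def depth : Formula K ν → ℕ
  | const _ => 0
  | var _ => 0
  | add f g => max f.depth g.depth + 1
  | mul f g => max f.depth g.depth + 1

def eval [CommRing K] (x : ν → K) : Formula K ν → K
  | const c => c
  | var v => x v
  | add f g => f.eval x + g.eval x
  | mul f g => f.eval x * g.eval x

/-- The polynomial computed by a formula. -/
noncomputable def toPoly [CommRing K] : Formula K ν → MvPolynomial ν K
  | const c => MvPolynomial.C c
  | var v => MvPolynomial.X v
  | add f g => f.toPoly + g.toPoly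
  | mul f g => f.toPoly * g.toPoly

/-- The set of variables appearing in a formula. -/
def varSet : Formula K ν → Set ν
  | const _ => ∅
  | var v => {v}
  | add f g => f.varSet ∪ g.varSet
  | mul f g => f.varSet ∪ g.varSet

/-- All constants of the formula are 0 or 1. -/
def ZeroOneConsts [Zero K] [One K] : Formula K ν → Prop
  | const c => c = 0 ∨ c = 1
  | var _ => True
  | add f g => f.ZeroOneConsts ∧ g.ZeroOneConsts
  | mul f g => f.ZeroOneConsts ∧ g.ZeroOneConsts

end Formula

/-! ### Arithmetic circuits -/

inductive CGate (K ν : Type) (n : ℕ) where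
  | const : K → CGate K ν n
  | var : ν → CGate K ν n
  | add : Fin n → Fin n → CGate K ν n
  | mul : Fin n → Fin n → CGate K ν n

def CGate.IsInput {K ν : Type} {n : ℕ} : CGate K ν n → Prop
  | .const _ => True
  | .var _ => True
  | _ => False

/-- An arithmetic circuit: an acyclic digraph of gates, the last gate being the output. -/
structure Circuit (K ν : Type) where
  size : ℕ
  pos : 0 < size
  gate : Fin size → CGate K ν size
  wf : ∀ i a b, (gate i = .add a b ∨ gate i = .mul a b) → a < i ∧ b < i

namespace Circuit
variable {K ν : Type}

def output (c : Circuit K ν) : Fin c.size := ⟨c.size - 1, Nat.sub_lt c.pos Nat.one_pos⟩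

def evalGate {R : Type} [CommRing R] (c : Circuit K ν) (cst : K → R) (x : ν → R) :
    Fin c.size → R := fun i =>
  match h : c.gate i with
  | .const a => cst a
  | .var v => x v
  | .add a b =>
      have hlt := c.wf i a b (Or.inl h)
      c.evalGate cst x a + c.evalGate cst x b
  | .mul a b =>
      have hlt := c.wf i a b (Or.inr h)
      c.evalGate cst x a * c.evalGate cst x b
termination_by i => i.1
decreasing_by
  · exact hlt.1
  · exact hlt.2
  · exact hlt.1
  · exact hlt.2

/-- The value computed (at the output gate) by a circuit. -/
def eval {R : Type} [CommRing R] (c : Circuit K ν) (cst : K → R) (x : ν → R) : R :=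
  c.evalGate cst x c.output

/-- The polynomial computed by a circuit. -/
noncomputable def evalP [CommRing K] (c : Circuit K ν) : MvPolynomial ν K :=
  c.eval MvPolynomial.C MvPolynomial.X

def depthGate (c : Circuit K ν) : Fin c.size → ℕ := fun i =>
  match h : c.gate i with
  | .const _ => 0
  | .var _ => 0
  | .add a b =>
      have hlt := c.wf i a b (Or.inl h)
      max (c.depthGate a) (c.depthGate b) + 1
  | .mul a b =>
      have hlt := c.wf i a b (Or.inr h)
      max (c.depthGate a) (c.depthGate b) + 1
termination_by i => i.1
decreasing_by
  · exact hlt.1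
  · exact hlt.2
  · exact hlt.1
  · exact hlt.2

/-- Depth of a circuit: length of the longest input-to-output path. -/
def depth (c : Circuit K ν) : ℕ := c.depthGate c.output

/-- A circuit is skew if every multiplication gate has at least one argument
which is an input gate. -/
def IsSkew (c : Circuit K ν) : Prop :=
  ∀ i a b, c.gate i = .mul a b → (c.gate a).IsInput ∨ (c.gate b).IsInput

/-- `arrow j i` : there is an arrow from gate `j` to gate `i`. -/
def arrow (c : Circuit K ν) (j i : Fin c.size) : Prop :=
  ∃ a b, (c.gate i = .add a b ∨ c.gate i = .mul a b) ∧ (j = a ∨ j = b)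

/-- The subcircuit rooted at `g` is connected to the rest of the circuit only through
the arrow from `g` to `i`. -/
def OnlyConn (c : Circuit K ν) (g i : Fin c.size) : Prop :=
  ∀ j, Relation.ReflTransGen c.arrow j g →
    ∀ k, c.arrow j k → Relation.ReflTransGen c.arrow k g ∨ (j = g ∧ k = i)

/-- A circuit is weakly skew if for every multiplication gate, at least one of the incoming
arrows comes from an input gate or from a subcircuit whose only connection to the rest of
the circuit is through this arrow. -/
def IsWeaklySkew (c : Circuit K ν) : Prop :=
  ∀ i a b, c.gate i = .mul a b →
    ((c.gate a).IsInput ∨ c.OnlyConn a i) ∨ ((c.gate b).IsInput ∨ c.OnlyConn b i)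

end Circuit

/-! ### Treewidth -/

/-- `G` admits a tree-decomposition of width at most `k`. -/
def HasTreewidthAtMost {V : Type} (G : SimpleGraph V) (k : ℕ) : Prop :=
  ∃ (n : ℕ) (T : SimpleGraph (Fin n)) (X : Fin n → Finset V),
    T.IsTree ∧
    (∀ t, (X t).card ≤ k + 1) ∧
    (∀ v : V, ∃ t, v ∈ X t) ∧
    (∀ u v : V, G.Adj u v → ∃ t, u ∈ X t ∧ v ∈ X t) ∧
    (∀ v : V, (T.induce {t | v ∈ X t}).Connected)

/-- The underlying undirected simple graph of a digraph (loops discarded). -/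
def underlyingGraph {V : Type} (E : V → V → Prop) : SimpleGraph V :=
  SimpleGraph.fromRel E

/-- The underlying undirected graph of the support digraph `G_M` of a matrix. -/
def supportGraph {m : ℕ} {R : Type} [Zero R] (M : Matrix (Fin m) (Fin m) R) :
    SimpleGraph (Fin m) :=
  SimpleGraph.fromRel (fun i j => M i j ≠ 0)

/-! ### Permanent, hamiltonian, cycle covers -/

/-- The permanent of a square matrix. -/
def perm {m : ℕ} {R : Type} [CommRing R] (M : Matrix (Fin m) (Fin m) R) : R :=
  ∑ σ : Equiv.Perm (Fin m), ∏ i, M i (σ i)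

/-- The hamiltonian polynomial of a square matrix: sum over permutations that are a
single cycle on all of `Fin m`. -/
noncomputable def ham {m : ℕ} {R : Type} [CommRing R] (M : Matrix (Fin m) (Fin m) R) : R :=
  ∑ σ ∈ Finset.univ.filter
      (fun σ : Equiv.Perm (Fin m) => σ.IsCycle ∧ σ.support = Finset.univ),
    ∏ i, M i (σ i)

/-- A cycle cover of the digraph with edge relation `E`: a set of edges of `E` forming
vertex-disjoint directed cycles (loops allowed) covering every vertex exactly once,
i.e. every vertex has exactly one outgoing and exactly one incoming edge in `C`. -/
def IsCycleCover {V : Type} (E : V → V → Prop) (C : Finset (V × V)) : Prop :=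
  (∀ e ∈ C, E e.1 e.2) ∧ (∀ v : V, ∃! u, (v, u) ∈ C) ∧ (∀ v : V, ∃! u, (u, v) ∈ C)

/-- The sum of weights of all cycle covers. -/
noncomputable def cycleCoverSum {V K : Type} [Fintype V] [DecidableEq V] [CommRing K]
    (E : V → V → Prop) (w : V → V → K) : K :=
  ∑ C : Finset (V × V), if IsCycleCover E C then ∏ e ∈ C, w e.1 e.2 else 0

/-! ### Weighted DAGs and path sums -/

/-- The weight of a path (given as the list of its vertices). -/
def pathWeight {V K : Type} [CommRing K] (w : V → V → K) (l : List V) : K :=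
  ((l.zip l.tail).map fun p => w p.1 p.2).prod

/-- `l` is (the vertex list of) a directed path from `s` to `t`. -/
def IsPathFromTo {V : Type} (E : V → V → Prop) (s t : V) (l : List V) : Prop :=
  l.Chain' E ∧ l.head? = some s ∧ l.getLast? = some t

/-- The sum of the weights of all directed paths from `s` to `t`. -/
noncomputable def SW {V K : Type} [Fintype V] [DecidableEq V] [CommRing K]
    (E : V → V → Prop) (w : V → V → K) (s t : V) : K :=
  ∑ l : {l : List V // l.Nodup},
    if IsPathFromTo E s t l.1 then pathWeight w l.1 else 0

/-- A digraph is acyclic if it has no directed cycle (in particular no loop). -/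
def Acyclic {V : Type} (E : V → V → Prop) : Prop :=
  ∀ v : V, ¬ Relation.TransGen E v v

/-! ### Perfect matchings, SPM, planarity -/

/-- `M` is (the edge set of) a perfect matching of `G`. -/
def IsPerfectMatchingSet {V : Type} (G : SimpleGraph V) (M : Finset (Sym2 V)) : Prop :=
  (∀ e ∈ M, e ∈ G.edgeSet) ∧ ∀ v : V, ∃! e, e ∈ M ∧ v ∈ e

/-- The sum of the weights of all perfect matchings of `G`. -/
noncomputable def SPM {V K : Type} [Fintype V] [DecidableEq V] [CommRing K]
    (G : SimpleGraph V) (w : Sym2 V → K) : K :=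
  ∑ M : Finset (Sym2 V), if IsPerfectMatchingSet G M then ∏ e ∈ M, w e else 0

/-- A graph is planar if it has a drawing in the plane: vertices are mapped to distinct
points, edges to simple arcs joining their endpoints, arcs meet vertices only at their
endpoints, and two arcs of distinct edges do not meet except possibly at endpoints. -/
def IsPlanar {V : Type} (G : SimpleGraph V) : Prop :=
  ∃ (f : V → ℝ × ℝ) (γ : ∀ u v : V, G.Adj u v → Path (f u) (f v)),
    Function.Injective f ∧
    (∀ u v h, Function.Injective fun t : unitInterval => (γ u v h) t) ∧
    (∀ u v h (t : unitInterval), t ≠ 0 → t ≠ 1 → ∀ x : V, (γ u v h) t ≠ f x) ∧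
    (∀ u v h u' v' h', s(u, v) ≠ s(u', v') →
      ∀ (t t' : unitInterval), t ≠ 0 → t ≠ 1 → t' ≠ 0 → t' ≠ 1 →
        (γ u v h) t ≠ (γ u' v' h') t')

/-!
A cycle cover of `G'` is a permutation `σ` of the vertices all of whose arrows `v ↦ σ v` lie in
`G'`. As `G` is acyclic, every nontrivial cycle of `σ` must use the return arc `t → s`, so `σ`
has exactly one nontrivial cycle, and read from `s` it is an `s`–`t` path of `G`. Conversely the
cyclic permutation of an `s`–`t` path (`List.formPerm`) fixing all other vertices is a cycle
cover, and it is inverse to `Equiv.Perm.toList · s`. The return arc and the loops weigh `1`, so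
the weights agree.
-/

open Equiv Equiv.Perm Finset

section CycleCovers

variable {V : Type} [Fintype V] [DecidableEq V]

def permGraph (σ : Perm V) : Finset (V × V) := univ.image fun v => (v, σ v)

@[simp]
lemma mem_permGraph {σ : Perm V} {a b : V} : (a, b) ∈ permGraph σ ↔ σ a = b := by
  simp [permGraph]

lemma permGraph_injective : Function.Injective (permGraph (V := V)) := by
  intro σ τ h
  ext v
  have hv : (v, σ v) ∈ permGraph τ := h ▸ mem_permGraph.2 rfl
  exact (mem_permGraph.1 hv).symm

lemma prod_permGraph {M : Type} [CommMonoid M] (σ : Perm V) (f : V → V → M) :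
    ∏ e ∈ permGraph σ, f e.1 e.2 = ∏ v, f v (σ v) :=
  prod_image fun _ _ _ _ h => congrArg Prod.fst h

lemma isCycleCover_permGraph {E : V → V → Prop} {σ : Perm V} (hσ : ∀ v, E v (σ v)) :
    IsCycleCover E (permGraph σ) :=
  ⟨fun ⟨a, _⟩ h => mem_permGraph.1 h ▸ hσ a,
    fun v => ⟨σ v, mem_permGraph.2 rfl, fun _ h => (mem_permGraph.1 h).symm⟩,
    fun v => ⟨σ.symm v, mem_permGraph.2 (σ.apply_symm_apply v),
      fun _ h => σ.eq_symm_apply.2 (mem_permGraph.1 h)⟩⟩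

lemma IsCycleCover.exists_perm {E : V → V → Prop} {C : Finset (V × V)}
    (hC : IsCycleCover E C) :
    ∃ σ : Perm V, (∀ v, E v (σ v)) ∧ permGraph σ = C := by
  choose f hf hf_unique using hC.2.1
  have hinj : Function.Injective f := fun a b h => (hC.2.2 (f a)).unique (hf a) (h ▸ hf b)
  refine ⟨Equiv.ofBijective f hinj.bijective_of_finite, fun v => hC.1 _ (hf v), ?_⟩
  ext ⟨a, b⟩
  rw [mem_permGraph, Equiv.ofBijective_apply]
  exact ⟨fun h => h ▸ hf a, fun h => (hf_unique a b h).symm⟩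

theorem cycleCoverSum_eq_sum_perm {K : Type} [CommRing K] (E : V → V → Prop)
    (w : V → V → K) :
    cycleCoverSum E w = ∑ σ : Perm V, if ∀ v, E v (σ v) then ∏ v, w v (σ v) else 0 := by
  rw [cycleCoverSum, ← sum_filter, ← sum_filter, eq_comm]
  refine sum_nbij permGraph (fun σ hσ => ?_) (fun σ _ τ _ h => permGraph_injective h)
    (fun C hC => ?_) (fun σ _ => (prod_permGraph σ w).symm)
  · exact (mem_filter_univ _).2 (isCycleCover_permGraph ((mem_filter_univ _).1 hσ))
  · obtain ⟨σ, hσ, rfl⟩ := ((mem_filter_univ _).1 hC).exists_perm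
    exact ⟨σ, (mem_filter_univ _).2 hσ, rfl⟩

end CycleCovers

section Acyclic

variable {V : Type} {E : V → V → Prop}

lemma Acyclic.irrefl (hE : Acyclic E) (v : V) : ¬E v v := fun h => hE v (.single h)

lemma Acyclic.exists_sameCycle_not_rel [Finite V] (hE : Acyclic E) (σ : Perm V) (v : V) :
    ∃ y, σ.SameCycle v y ∧ ¬E y (σ y) := by
  by_contra! h
  have hreach : ∀ n, Relation.TransGen E v ((σ ^ (n + 1)) v) := by
    intro n
    induction n with
    | zero => exact .single (by simpa using h v (.refl σ v))
    | succ n ih =>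
      refine ih.tail ?_
      rw [pow_succ' σ (n + 1), mul_apply]
      exact h _ (sameCycle_pow_right.2 (.refl σ v))
  have hcycle := hreach (orderOf σ - 1)
  rw [Nat.sub_add_cancel (orderOf_pos σ), pow_orderOf_eq_one, one_apply] at hcycle
  exact hE v hcycle

end Acyclic

lemma List.map_formPerm_apply {α M : Type} [DecidableEq α] (f : α → α → M) {l : List α}
    (hl : l.Nodup) (hne : l ≠ []) :
    l.map (fun v => f v (l.formPerm v)) =
      (l.zip l.tail).map (fun p => f p.1 p.2) ++ [f (l.getLast hne) (l.head hne)] := by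
  have hlen : 0 < l.length := List.length_pos_iff.2 hne
  refine List.ext_getElem (by simp; omega) fun i h₁ h₂ => ?_
  rw [List.getElem_map, List.formPerm_apply_getElem l hl]
  by_cases hi : i + 1 < l.length
  · rw [List.getElem_append_left (by simp; omega)]
    simp [Nat.mod_eq_of_lt hi]
  · have hi' : i = l.length - 1 := by simp at h₁; omega
    subst hi'
    rw [List.getElem_append_right (by simp)]
    simp [Nat.sub_add_cancel hlen, List.getLast_eq_getElem, List.head_eq_getElem]

lemma List.IsChain.rel_of_mem_zip_tail {α : Type} {R : α → α → Prop} {l : List α}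
    (hl : l.IsChain R) {p : α × α} (hp : p ∈ l.zip l.tail) : R p.1 p.2 := by
  obtain ⟨i, hi, rfl⟩ := List.getElem_of_mem hp
  simp only [List.length_zip, List.length_tail, lt_min_iff] at hi
  simpa using hl.getElem i (by omega)

def addReturnArcAndLoops {V : Type} (E : V → V → Prop) (s t : V) : V → V → Prop :=
  fun a b => E a b ∨ (a = t ∧ b = s) ∨ (a = b ∧ a ≠ s ∧ a ≠ t)

section PermToPath

variable {V : Type} {E : V → V → Prop} {s t : V} {σ : Perm V}

lemma apply_source_ne (hE : Acyclic E) (hst : s ≠ t)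
    (hσ : ∀ v, addReturnArcAndLoops E s t v (σ v)) : σ s ≠ s := by
  intro h
  rcases h ▸ hσ s with h' | ⟨h', -⟩ | ⟨-, h', -⟩
  · exact hE.irrefl s h'
  · exact hst h'
  · exact h' rfl

lemma apply_target_eq_source_and_sameCycle [Finite V] (hE : Acyclic E) (hst : s ≠ t)
    (hσ : ∀ v, addReturnArcAndLoops E s t v (σ v)) : σ t = s ∧ σ.SameCycle s t := by
  obtain ⟨y, hy, hyE⟩ := hE.exists_sameCycle_not_rel σ s
  have hy_moved : σ y ≠ y := fun h => apply_source_ne hE hst hσ (hy.apply_eq_self_iff.2 h)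
  rcases hσ y with h | ⟨rfl, h⟩ | ⟨h, -⟩
  · exact absurd h hyE
  · exact ⟨h, hy⟩
  · exact absurd h.symm hy_moved

lemma apply_eq_self_of_not_sameCycle [Finite V] (hE : Acyclic E) (hst : s ≠ t)
    (hσ : ∀ v, addReturnArcAndLoops E s t v (σ v)) {v : V} (hv : ¬σ.SameCycle s v) :
    σ v = v := by
  by_contra hv_moved
  obtain ⟨y, hy, hyE⟩ := hE.exists_sameCycle_not_rel σ v
  have hy_moved : σ y ≠ y := fun h => hv_moved (hy.apply_eq_self_iff.2 h)
  rcases hσ y with h | ⟨rfl, -⟩ | ⟨h, -⟩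
  · exact hyE h
  · exact hv ((apply_target_eq_source_and_sameCycle hE hst hσ).2.trans hy.symm)
  · exact hy_moved h.symm

variable [DecidableEq V]

lemma isPathFromTo_of_formPerm {l : List V} (hnd : l.Nodup) (hlen : 2 ≤ l.length) (hl0 : l[0] = s)
    (hl : ∀ v, addReturnArcAndLoops E s t v (l.formPerm v)) (hts : l.formPerm t = s) :
    IsPathFromTo E s t l := by
  refine ⟨List.isChain_iff_getElem.2 fun i hi => ?_, ?_, ?_⟩
  · have hnext := List.formPerm_apply_lt_getElem l hnd i hi
    rcases hl l[i] with h | ⟨-, h⟩ | ⟨h, -⟩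
    · rwa [hnext] at h
    · rw [hnext, ← hl0, hnd.getElem_inj_iff] at h
      omega
    · rw [hnext, hnd.getElem_inj_iff] at h
      omega
  · rw [List.head?_eq_getElem?, List.getElem?_eq_getElem (by omega), hl0]
  · have hlast : l.formPerm l[l.length - 1] = s := by
      rw [List.formPerm_apply_getElem l hnd, ← hl0]
      simp only [Nat.sub_add_cancel (by omega : 1 ≤ l.length), Nat.mod_self]
    rw [List.getLast?_eq_getElem?, List.getElem?_eq_getElem (by omega),
      l.formPerm.injective (hlast.trans hts.symm)]

variable [Fintype V]

lemma formPerm_toList_eq_self (hE : Acyclic E) (hst : s ≠ t)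
    (hσ : ∀ v, addReturnArcAndLoops E s t v (σ v)) : (σ.toList s).formPerm = σ := by
  rw [formPerm_toList]
  ext v
  rw [cycleOf_apply]
  split_ifs with hv
  · rfl
  · exact (apply_eq_self_of_not_sameCycle hE hst hσ hv).symm

lemma isPathFromTo_toList (hE : Acyclic E) (hst : s ≠ t)
    (hσ : ∀ v, addReturnArcAndLoops E s t v (σ v)) : IsPathFromTo E s t (σ.toList s) := by
  have hl := formPerm_toList_eq_self hE hst hσ
  have hs : s ∈ σ.support := mem_support.2 (apply_source_ne hE hst hσ)
  exact isPathFromTo_of_formPerm (nodup_toList σ s) (two_le_length_toList_iff_mem_support.2 hs)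
    (toList_getElem_zero σ s hs) (by rwa [hl])
    (by rw [hl]; exact (apply_target_eq_source_and_sameCycle hE hst hσ).1)

end PermToPath

section PathToPerm

variable {V : Type} {E : V → V → Prop} {s t : V} {l : List V}

lemma IsPathFromTo.ne_nil (hp : IsPathFromTo E s t l) : l ≠ [] := by
  rintro rfl
  simp [IsPathFromTo] at hp

lemma IsPathFromTo.head_eq (hp : IsPathFromTo E s t l) : l.head hp.ne_nil = s := by
  simpa [List.head?_eq_some_head hp.ne_nil] using hp.2.1

lemma IsPathFromTo.getLast_eq (hp : IsPathFromTo E s t l) : l.getLast hp.ne_nil = t := by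
  simpa [List.getLast?_eq_some_getLast hp.ne_nil] using hp.2.2

lemma IsPathFromTo.two_le_length (hp : IsPathFromTo E s t l) (hst : s ≠ t) : 2 ≤ l.length := by
  rcases l with _ | ⟨a, _ | ⟨b, l⟩⟩
  · exact absurd rfl hp.ne_nil
  · exact absurd (hp.head_eq.symm.trans hp.getLast_eq) hst
  · simp

variable [DecidableEq V]

lemma IsPathFromTo.addReturnArcAndLoops_formPerm (hp : IsPathFromTo E s t l) (hnd : l.Nodup)
    (v : V) :
    addReturnArcAndLoops E s t v (l.formPerm v) := by
  by_cases hv : v ∈ l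
  · obtain ⟨i, hi, rfl⟩ := List.getElem_of_mem hv
    by_cases hi' : i + 1 < l.length
    · left
      rw [List.formPerm_apply_lt_getElem l hnd i hi']
      exact hp.1.getElem i hi'
    · right; left
      obtain rfl : i = l.length - 1 := by omega
      refine ⟨(List.getLast_eq_getElem hp.ne_nil).symm.trans hp.getLast_eq, ?_⟩
      rw [List.formPerm_apply_getElem l hnd]
      simp only [Nat.sub_add_cancel (by omega : 1 ≤ l.length), Nat.mod_self]
      exact (List.head_eq_getElem hp.ne_nil).symm.trans hp.head_eq
  · right; right
    rw [List.formPerm_apply_of_notMem hv]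
    refine ⟨rfl, ?_, ?_⟩
    · rintro rfl
      exact hv (hp.head_eq ▸ List.head_mem hp.ne_nil)
    · rintro rfl
      exact hv (hp.getLast_eq ▸ List.getLast_mem hp.ne_nil)

lemma IsPathFromTo.toList_formPerm [Fintype V] (hp : IsPathFromTo E s t l) (hnd : l.Nodup)
    (hst : s ≠ t) : l.formPerm.toList s = l := by
  have h := toList_formPerm_nontrivial l (hp.two_le_length hst) hnd
  rwa [List.get_eq_getElem, ← List.head_eq_getElem hp.ne_nil, hp.head_eq] at h

lemma IsPathFromTo.prod_formPerm_eq_pathWeight [Fintype V] {K : Type} [CommRing K]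
    (hp : IsPathFromTo E s t l) (hE : Acyclic E) (hts : ¬E t s) (hnd : l.Nodup)
    (w : V → V → K) :
    ∏ v, (if E v (l.formPerm v) then w v (l.formPerm v) else 1) = pathWeight w l := by
  rw [← prod_subset (subset_univ l.toFinset), List.prod_toFinset _ hnd,
    List.map_formPerm_apply (fun a b => if E a b then w a b else 1) hnd hp.ne_nil,
    hp.head_eq, hp.getLast_eq, List.prod_append, pathWeight, if_neg hts]
  · simp only [List.prod_singleton, mul_one]
    congr 1
    exact List.map_congr_left fun p hp' => if_pos (hp.1.rel_of_mem_zip_tail hp')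
  · intro v _ hv
    rw [List.mem_toFinset] at hv
    rw [List.formPerm_apply_of_notMem hv, if_neg (hE.irrefl v)]

end PathToPerm

/-- adding to an acyclic graph `G` an edge of weight 1 from `t` back to `s`
and weight-1 loops at all vertices other than `s` and `t` yields a graph `G'` whose sum of
weights of cycle covers equals `SW(G)`. -/
theorem cycleCoverSum_eq_SW {V K : Type} [Fintype V] [DecidableEq V] [CommRing K]
    (E : V → V → Prop) (w : V → V → K) (s t : V)
    (hac : Acyclic E) (hst : s ≠ t) (hts : ¬ E t s) :
    cycleCoverSum
        (fun a b => E a b ∨ (a = t ∧ b = s) ∨ (a = b ∧ a ≠ s ∧ a ≠ t))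
        (fun a b => if E a b then w a b else 1)
      = SW E w s t := by
  change cycleCoverSum (addReturnArcAndLoops E s t) _ = _
  rw [cycleCoverSum_eq_sum_perm, SW, ← sum_filter, ← sum_filter, eq_comm]
  refine sum_nbij' (fun l => l.1.formPerm) (fun σ => ⟨σ.toList s, σ.nodup_toList s⟩)
    ?_ ?_ ?_ ?_ ?_ <;> simp only [mem_filter_univ]
  · exact fun l hl => hl.addReturnArcAndLoops_formPerm l.2
  · exact fun σ hσ => isPathFromTo_toList hac hst hσ
  · exact fun l hl => Subtype.ext (hl.toList_formPerm l.2 hst)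
  · exact fun σ hσ => formPerm_toList_eq_self hac hst hσ
  · exact fun l hl => (hl.prod_formPerm_eq_pathWeight hac hts l.2 w).symm
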